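/- Let P be a finite-dimensional graded vector space in odd negative degrees with dual bases c_j ∈ P, c^j ∈ P*, and corresponding shifted bases p^j of the symmetric algebra S(P*[1]). For any differential ∧P-module (Y, d_Y), the nilpotent degree-0 endomorphism α = Σ_k c^k ⊗ ι_Y(c_k) of K(P) ⊗ Y satisfies: Ad(e^{−α})(ι_{K(P)}(c_j)⊗1) = ι_{K(P)}(c_j)⊗1 + 1⊗ι_Y(c_j) and Ad(e^{−α})(d_{K(P)}⊗1 + 1⊗d_Y − Σ_j p^j⊗ι_Y(c_j)) = d_{K(P)}⊗1 + 1⊗d_Y. Consequently e^α: K(P)⊗Y → htY is an isomorphism of differential ∧P-modules, where h and t are the Koszul duality functors. -/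

import Mathlib

set_option maxHeartbeats 1000000
set_option synthInstance.maxHeartbeats 1000000
set_option maxSynthPendingDepth 3

open ExteriorAlgebra TensorProduct

noncomputable section

/-- Truncated exponential of an endomorphism (`= e^T` when `T ^ N = 0`). -/
def expE {𝕜 V : Type*} [Field 𝕜] [AddCommGroup V] [Module 𝕜 V]
    (T : Module.End 𝕜 V) (N : ℕ) : Module.End 𝕜 V :=
  ∑ i ∈ Finset.range N, (i.factorial : 𝕜)⁻¹ • T ^ i

/-- Koszul data for a finite-dimensional graded vector space `P` concentrated in odd negative
degrees, with dual bases `c_j ∈ P` and `c^j ∈ P*`: the symmetric algebra `S(P*[1])` is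
modelled as `MvPolynomial J 𝕜` (`X j` corresponding to the shifted generator `p^j`), the
exterior algebra `⋀P*` as the exterior algebra of a space `U` with basis `cb`
(`ι (cb j)` corresponding to `c^j`), and `κ j` is the contraction operator `ι(c_j)` on
`⋀P*`. -/
structure KoszulData (𝕜 U J : Type*) [Field 𝕜] [AddCommGroup U] [Module 𝕜 U]
    [Fintype J] [DecidableEq J] where
  cb : Module.Basis J 𝕜 U
  κ : J → Module.End 𝕜 (ExteriorAlgebra 𝕜 U)
  κ_one : ∀ j, κ j 1 = 0
  κ_mul : ∀ j i a, κ j (ι 𝕜 (cb i) * a)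
      = (if i = j then a else 0) - ι 𝕜 (cb i) * κ j a

namespace KoszulData

variable {𝕜 U J : Type*} [Field 𝕜] [AddCommGroup U] [Module 𝕜 U]
  [Fintype J] [DecidableEq J] (S : KoszulData 𝕜 U J)

/-- The parity (degree) involution of `⋀P*`, induced by `-id`. -/
def par (_S : KoszulData 𝕜 U J) : Module.End 𝕜 (ExteriorAlgebra 𝕜 U) :=
  (ExteriorAlgebra.map (-LinearMap.id : U →ₗ[𝕜] U)).toLinearMap

/-- The parity involution of the Koszul complex `K(P) = S(P*[1]) ⊗ ⋀P*` (the symmetric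
factor being even). It implements the Koszul sign rule for operators `1 ⊗ B` with `B` odd. -/
def parK (_S : KoszulData 𝕜 U J) : Module.End 𝕜 (MvPolynomial J 𝕜 ⊗[𝕜] ExteriorAlgebra 𝕜 U) :=
  LinearMap.lTensor _ (par _S)

/-- The contraction `ι_K(c_j)` on the Koszul complex. -/
def ιK (j : J) : Module.End 𝕜 (MvPolynomial J 𝕜 ⊗[𝕜] ExteriorAlgebra 𝕜 U) :=
  LinearMap.lTensor _ (S.κ j)

/-- The Koszul differential `d_{K(P)} = Σ_j p^j ⊗ ι(c_j)`. -/
def dK : Module.End 𝕜 (MvPolynomial J 𝕜 ⊗[𝕜] ExteriorAlgebra 𝕜 U) :=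
  ∑ j, LinearMap.mulLeft 𝕜
      ((MvPolynomial.X j : MvPolynomial J 𝕜) ⊗ₜ[𝕜] (1 : ExteriorAlgebra 𝕜 U)) ∘ₗ S.ιK j

end KoszulData


section ExpLemmas
variable {𝕜 V : Type*} [Field 𝕜] [CharZero 𝕜] [AddCommGroup V] [Module 𝕜 V]

lemma coeff_sum (n : ℕ) :
    (∑ i ∈ Finset.range (n+1), (-1:𝕜)^i * ((i.factorial : 𝕜)⁻¹ * ((n-i).factorial : 𝕜)⁻¹))
      = if n = 0 then 1 else 0 := by
  have hn : (n.factorial : 𝕜) ≠ 0 := Nat.cast_ne_zero.mpr n.factorial_ne_zero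
  have key : ∀ i ∈ Finset.range (n+1),
      (-1:𝕜)^i * ((i.factorial : 𝕜)⁻¹ * ((n-i).factorial : 𝕜)⁻¹)
        = ((-1:𝕜)^i * (n.choose i : 𝕜)) * (n.factorial : 𝕜)⁻¹ := by
    intro i hi
    have hi' : i ≤ n := Nat.lt_succ_iff.mp (Finset.mem_range.mp hi)
    have h := Nat.choose_mul_factorial_mul_factorial hi'
    have h𝕜 : (n.choose i : 𝕜) * (i.factorial : 𝕜) * ((n-i).factorial : 𝕜) = (n.factorial : 𝕜) := by
      exact_mod_cast congrArg (Nat.cast : ℕ → 𝕜) h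
    have hif : (i.factorial : 𝕜) ≠ 0 := Nat.cast_ne_zero.mpr i.factorial_ne_zero
    have hnif : ((n-i).factorial : 𝕜) ≠ 0 := Nat.cast_ne_zero.mpr (n-i).factorial_ne_zero
    rw [← h𝕜, mul_inv, mul_inv]
    have hc : (n.choose i : 𝕜) ≠ 0 := Nat.cast_ne_zero.mpr (Nat.choose_pos hi').ne'
    field_simp
  rw [Finset.sum_congr rfl key, ← Finset.sum_mul]
  have : (∑ i ∈ Finset.range (n+1), (-1:𝕜)^i * (n.choose i : 𝕜))
      = ((∑ m ∈ Finset.range (n+1), ((-1)^m * n.choose m : ℤ) : ℤ) : 𝕜) := by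
    push_cast; ring
  rw [this, Int.alternating_sum_range_choose]
  by_cases h : n = 0
  · subst h; norm_num
  · simp [h]

lemma expE_neg_mul (T : Module.End 𝕜 V) {N : ℕ} (hN : T ^ N = 0) (h0 : N ≠ 0) :
    expE ((-1 : 𝕜) • T) N * expE T N = 1 := by
  have hpow : ∀ m, N ≤ m → T ^ m = 0 := fun m hm => pow_eq_zero_of_le hm hN
  have step1 : expE ((-1 : 𝕜) • T) N * expE T N
      = ∑ i ∈ Finset.range N, ∑ l ∈ Finset.range N,
          ((-1:𝕜)^i * ((i.factorial : 𝕜)⁻¹ * ((l.factorial : 𝕜)⁻¹))) • T ^ (i + l) := by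
    rw [expE, expE, Finset.sum_mul_sum]
    refine Finset.sum_congr rfl fun i _ => Finset.sum_congr rfl fun l _ => ?_
    rw [smul_pow, smul_smul, smul_mul_smul_comm, ← pow_add]
    ring_nf
  rw [step1]
  -- shrink inner sums
  have step2 : ∀ i ∈ Finset.range N,
      (∑ l ∈ Finset.range N,
          ((-1:𝕜)^i * ((i.factorial : 𝕜)⁻¹ * ((l.factorial : 𝕜)⁻¹))) • T ^ (i + l))
      = ∑ n ∈ Finset.Ico i N,
          ((-1:𝕜)^i * ((i.factorial : 𝕜)⁻¹ * (((n-i).factorial : 𝕜)⁻¹))) • T ^ n := by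
    intro i hi
    symm
    rw [Finset.sum_Ico_eq_sum_range]
    simp only [Nat.add_sub_cancel_left]
    refine Finset.sum_subset (Finset.range_subset_range.mpr (Nat.sub_le N i)) ?_
    intro l hl hnl
    have : N ≤ i + l := by
      simp only [Finset.mem_range, not_lt] at hnl
      omega
    rw [hpow _ this, smul_zero]
  rw [Finset.sum_congr rfl step2]
  have := Finset.sum_Ico_Ico_comm 0 N (fun i n =>
      ((-1:𝕜)^i * ((i.factorial : 𝕜)⁻¹ * (((n-i).factorial : 𝕜)⁻¹))) • T ^ n)
  rw [Finset.range_eq_Ico, this]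
  have step3 : ∀ n ∈ Finset.Ico 0 N,
      (∑ i ∈ Finset.Ico 0 (n+1),
          ((-1:𝕜)^i * ((i.factorial : 𝕜)⁻¹ * (((n-i).factorial : 𝕜)⁻¹))) • T ^ n)
      = if n = 0 then T ^ n else 0 := by
    intro n _
    rw [← Finset.sum_smul, ← Finset.range_eq_Ico, coeff_sum]
    split <;> simp
  rw [Finset.sum_congr rfl step3, Finset.sum_ite_eq']
  simp [Nat.pos_of_ne_zero h0]

lemma expE_comm_pow (T X B : Module.End 𝕜 V)
    (hXT : X * T = T * X + B) (hTB : T * B = B * T) (n : ℕ) :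
    X * T ^ (n+1) = T ^ (n+1) * X + ((n : 𝕜) + 1) • (T ^ n * B) := by
  induction n with
  | zero => simpa using hXT
  | succ n ih =>
    have hTB' : T ^ n * B * T = T ^ (n+1) * B := by
      rw [mul_assoc, ← hTB, ← mul_assoc, ← pow_succ]
    have h1 : X * T ^ (n+1+1) = (X * T ^ (n+1)) * T := by
      rw [pow_succ, ← mul_assoc]
    rw [h1, ih, add_mul, smul_mul_assoc, mul_assoc, hXT, hTB', mul_add, ← mul_assoc,
      ← pow_succ, add_assoc]
    congr 1
    push_cast
    module

lemma expE_mul_comm (T X B : Module.End 𝕜 V) {N : ℕ} (hN : T ^ N = 0) (h0 : N ≠ 0)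
    (hXT : X * T = T * X + B) (hTB : T * B = B * T) :
    X * expE T N = expE T N * (X + B) := by
  obtain ⟨M, rfl⟩ := Nat.exists_eq_succ_of_ne_zero h0
  have hlast : T ^ M * B = 0 := by
    have h := expE_comm_pow T X B hXT hTB M
    rw [← Nat.succ_eq_add_one, hN, mul_zero, zero_mul, zero_add] at h
    have hcoeff : ((M : 𝕜) + 1) ≠ 0 := by
      have : ((M : 𝕜) + 1) = ((M + 1 : ℕ) : 𝕜) := by push_cast; ring
      rw [this]
      exact Nat.cast_ne_zero.mpr (Nat.succ_ne_zero M)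
    exact (smul_eq_zero.mp h.symm).resolve_left hcoeff
  have expand : X * expE T (M+1)
      = ∑ n ∈ Finset.range (M+1), (n.factorial : 𝕜)⁻¹ • (X * T ^ n) := by
    rw [expE, Finset.mul_sum]
    exact Finset.sum_congr rfl fun n _ => by rw [mul_smul_comm]
  rw [expand, Finset.sum_range_succ']
  simp only [expE_comm_pow T X B hXT hTB, pow_zero, mul_one, Nat.factorial_zero,
    Nat.cast_one, inv_one, one_smul, smul_add]
  rw [Finset.sum_add_distrib]
  have coeff_eq : ∀ m : ℕ, (((m+1).factorial : 𝕜)⁻¹ • (((m : 𝕜) + 1) • (T ^ m * B)))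
      = (m.factorial : 𝕜)⁻¹ • (T ^ m * B) := by
    intro m
    rw [smul_smul, Nat.factorial_succ]
    congr 1
    have hm1 : ((m : 𝕜) + 1) ≠ 0 := by
      have : ((m : 𝕜) + 1) = ((m + 1 : ℕ) : 𝕜) := by push_cast; ring
      rw [this]; exact Nat.cast_ne_zero.mpr (Nat.succ_ne_zero m)
    have hmf : ((m.factorial : 𝕜)) ≠ 0 := Nat.cast_ne_zero.mpr m.factorial_ne_zero
    push_cast
    field_simp
  rw [Finset.sum_congr rfl fun m _ => coeff_eq m]
  have hBsum : (∑ m ∈ Finset.range M, (m.factorial : 𝕜)⁻¹ • (T ^ m * B))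
      = expE T (M+1) * B := by
    rw [expE, Finset.sum_mul, Finset.sum_range_succ, smul_mul_assoc, hlast, smul_zero, add_zero]
    exact Finset.sum_congr rfl fun m _ => by rw [smul_mul_assoc]
  have hXsum : ((∑ m ∈ Finset.range M, ((m+1).factorial : 𝕜)⁻¹ • (T ^ (m+1) * X)) + X)
      = expE T (M+1) * X := by
    rw [expE, Finset.sum_mul, Finset.sum_range_succ']
    simp [smul_mul_assoc]
  rw [mul_add]
  rw [← hBsum, ← hXsum]
  abel

lemma expE_mul_neg (T : Module.End 𝕜 V) {N : ℕ} (hN : T ^ N = 0) (h0 : N ≠ 0) :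
    expE T N * expE ((-1 : 𝕜) • T) N = 1 := by
  have h' : ((-1:𝕜) • T) ^ N = 0 := by rw [smul_pow, hN, smul_zero]
  have h := expE_neg_mul ((-1:𝕜) • T) h' h0
  rw [smul_smul] at h
  norm_num at h
  rw [show ((-1:𝕜) • T) = -T by simp]
  exact h

lemma expE_conj (T X B : Module.End 𝕜 V) {N : ℕ} (hN : T ^ N = 0) (h0 : N ≠ 0)
    (hXT : X * T = T * X + B) (hTB : T * B = B * T) :
    expE ((-1 : 𝕜) • T) N * X * expE T N = X + B := by
  rw [mul_assoc, expE_mul_comm T X B hN h0 hXT hTB, ← mul_assoc,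
    expE_neg_mul T hN h0, one_mul]

end ExpLemmas

namespace KoszulData

variable {𝕜 U J : Type*} [Field 𝕜] [AddCommGroup U] [Module 𝕜 U]
  [Fintype J] [DecidableEq J] (S : KoszulData 𝕜 U J)

-- pointwise lemmas on the exterior algebra
lemma par_mul' (a b : ExteriorAlgebra 𝕜 U) : S.par (a * b) = S.par a * S.par b :=
  map_mul (ExteriorAlgebra.map (-LinearMap.id : U →ₗ[𝕜] U)) a b

lemma par_one' : S.par (1 : ExteriorAlgebra 𝕜 U) = 1 :=
  map_one (ExteriorAlgebra.map (-LinearMap.id : U →ₗ[𝕜] U))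

lemma par_ι (u : U) : S.par (ι 𝕜 u) = - ι 𝕜 u := by
  show (ExteriorAlgebra.map (-LinearMap.id : U →ₗ[𝕜] U)) (ι 𝕜 u) = - ι 𝕜 u
  rw [ExteriorAlgebra.map_apply_ι]
  simp

lemma par_algebraMap (r : 𝕜) : S.par (algebraMap 𝕜 (ExteriorAlgebra 𝕜 U) r)
    = algebraMap 𝕜 (ExteriorAlgebra 𝕜 U) r :=
  AlgHom.commutes _ r

lemma par_par (a : ExteriorAlgebra 𝕜 U) : S.par (S.par a) = a := by
  induction a using ExteriorAlgebra.induction with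
  | algebraMap r => rw [par_algebraMap, par_algebraMap]
  | ι u => rw [par_ι, map_neg, par_ι, neg_neg]
  | mul a b ha hb => rw [par_mul', par_mul', ha, hb]
  | add a b ha hb => rw [map_add, map_add, ha, hb]

lemma κ_algebraMap (j : J) (r : 𝕜) : S.κ j (algebraMap 𝕜 (ExteriorAlgebra 𝕜 U) r) = 0 := by
  rw [Algebra.algebraMap_eq_smul_one, map_smul, S.κ_one, smul_zero]

lemma κ_ι_mul (j : J) (u : U) (b : ExteriorAlgebra 𝕜 U) :
    S.κ j (ι 𝕜 u * b) = S.cb.repr u j • b - ι 𝕜 u * S.κ j b := by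
  have hu : (ι 𝕜 u : ExteriorAlgebra 𝕜 U) = ∑ i, S.cb.repr u i • ι 𝕜 (S.cb i) := by
    conv_lhs => rw [← S.cb.sum_repr u]
    rw [map_sum]
    exact Finset.sum_congr rfl fun i _ => by rw [map_smul]
  rw [hu, Finset.sum_mul]
  simp only [smul_mul_assoc]
  rw [map_sum]
  simp only [map_smul, S.κ_mul j]
  rw [Finset.sum_congr rfl (fun i _ => smul_sub (S.cb.repr u i) _ _), Finset.sum_sub_distrib]
  congr 1
  · simp only [smul_ite, smul_zero, Finset.sum_ite_eq', Finset.mem_univ, if_true]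
  · rw [Finset.sum_mul]
    exact Finset.sum_congr rfl fun i _ => (smul_mul_assoc _ _ _).symm

lemma κ_ι (j : J) (u : U) : S.κ j (ι 𝕜 u) = S.cb.repr u j • 1 := by
  have := S.κ_ι_mul j u 1
  rw [mul_one, S.κ_one, mul_zero, sub_zero] at this
  exact this

lemma κ_deriv (j : J) (a b : ExteriorAlgebra 𝕜 U) :
    S.κ j (a * b) = S.κ j a * b + S.par a * S.κ j b := by
  induction a using ExteriorAlgebra.induction generalizing b with
  | algebraMap r =>
    rw [S.κ_algebraMap, S.par_algebraMap, zero_mul, zero_add, Algebra.algebraMap_eq_smul_one,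
      smul_mul_assoc, one_mul, map_smul, smul_mul_assoc, one_mul]
  | ι u =>
    rw [S.κ_ι_mul, S.κ_ι, S.par_ι, smul_mul_assoc, one_mul, neg_mul, sub_eq_add_neg]
  | mul x y hx hy =>
    rw [mul_assoc, hx, hy, hx y, S.par_mul', mul_add]
    noncomm_ring
  | add x y hx hy =>
    rw [add_mul, map_add, hx, hy, map_add, add_mul, map_add, add_mul]
    abel

lemma par_κ (j : J) (a : ExteriorAlgebra 𝕜 U) :
    S.par (S.κ j a) = - S.κ j (S.par a) := by
  induction a using ExteriorAlgebra.induction with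
  | algebraMap r => rw [S.κ_algebraMap, map_zero, S.par_algebraMap, S.κ_algebraMap, neg_zero]
  | ι u =>
    rw [S.κ_ι, map_smul, S.par_one', S.par_ι, map_neg, S.κ_ι, neg_neg]
  | mul x y hx hy =>
    rw [S.κ_deriv, map_add, S.par_mul', S.par_mul', hx, hy, S.par_mul', S.κ_deriv,
      neg_add, neg_mul, mul_neg, S.par_par]
  | add x y hx hy =>
    rw [map_add, map_add, hx, hy, map_add, map_add, neg_add]

-- End-level identities on the exterior algebra
lemma E1 (j k : J) : S.κ j * LinearMap.mulLeft 𝕜 (ι 𝕜 (S.cb k))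
    = (if k = j then 1 else 0) - LinearMap.mulLeft 𝕜 (ι 𝕜 (S.cb k)) * S.κ j := by
  refine LinearMap.ext fun a => ?_
  simp only [Module.End.mul_apply, LinearMap.mulLeft_apply, LinearMap.sub_apply]
  rw [S.κ_mul j k a]
  congr 1
  split <;> simp

lemma E2 (j : J) : S.par * S.κ j = - (S.κ j * S.par) := by
  refine LinearMap.ext fun a => ?_
  simp only [Module.End.mul_apply, LinearMap.neg_apply]
  exact S.par_κ j a

lemma E3 : S.par * S.par = 1 := by
  refine LinearMap.ext fun a => ?_
  simp only [Module.End.mul_apply, Module.End.one_apply]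
  exact S.par_par a

lemma E4 (u : U) : S.par * LinearMap.mulLeft 𝕜 (ι 𝕜 u)
    = - (LinearMap.mulLeft 𝕜 (ι 𝕜 u) * S.par) := by
  refine LinearMap.ext fun a => ?_
  simp only [Module.End.mul_apply, LinearMap.mulLeft_apply, LinearMap.neg_apply]
  rw [S.par_mul', S.par_ι, neg_mul]

lemma parK2 : S.parK * S.parK = 1 := by
  refine TensorProduct.ext' fun p a => ?_
  simp only [KoszulData.parK, Module.End.mul_apply, LinearMap.lTensor_tmul, Module.End.one_apply]
  rw [S.par_par]

-- K-level operators
def MK (k : J) : Module.End 𝕜 (MvPolynomial J 𝕜 ⊗[𝕜] ExteriorAlgebra 𝕜 U) :=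
  LinearMap.mulLeft 𝕜 ((1 : MvPolynomial J 𝕜) ⊗ₜ[𝕜] ι 𝕜 (S.cb k))

def PK (_S : KoszulData 𝕜 U J) (j : J) : Module.End 𝕜 (MvPolynomial J 𝕜 ⊗[𝕜] ExteriorAlgebra 𝕜 U) :=
  LinearMap.mulLeft 𝕜 ((MvPolynomial.X j : MvPolynomial J 𝕜) ⊗ₜ[𝕜] (1 : ExteriorAlgebra 𝕜 U))

lemma dA1 (j k : J) : S.ιK j * (S.MK k * S.parK)
    = (S.MK k * S.parK) * S.ιK j + (if k = j then S.parK else 0) := by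
  refine TensorProduct.ext' fun p a => ?_
  simp only [KoszulData.parK, KoszulData.ιK, MK, Module.End.mul_apply, LinearMap.add_apply,
    LinearMap.mulLeft_apply, LinearMap.lTensor_tmul, Algebra.TensorProduct.tmul_mul_tmul,
    one_mul]
  rw [S.κ_mul j k, S.par_κ]
  by_cases h : k = j <;>
    simp [h, TensorProduct.tmul_sub, TensorProduct.tmul_add, TensorProduct.tmul_neg, mul_neg,
      sub_eq_add_neg, add_comm]

lemma dA2a (k : J) : (S.MK k * S.parK) * S.parK = S.MK k := by
  refine TensorProduct.ext' fun p a => ?_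
  simp only [KoszulData.parK, MK, Module.End.mul_apply, LinearMap.mulLeft_apply,
    LinearMap.lTensor_tmul, Algebra.TensorProduct.tmul_mul_tmul, one_mul]
  rw [S.par_par]

lemma dA2b (k : J) : S.parK * (S.MK k * S.parK) = - S.MK k := by
  refine TensorProduct.ext' fun p a => ?_
  simp only [KoszulData.parK, MK, Module.End.mul_apply, LinearMap.mulLeft_apply,
    LinearMap.lTensor_tmul, Algebra.TensorProduct.tmul_mul_tmul, one_mul, LinearMap.neg_apply]
  rw [S.par_mul', S.par_ι, S.par_par]
  simp [TensorProduct.tmul_neg]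

lemma dA3 (j k : J) : (S.MK k * S.parK) * S.PK j = S.PK j * (S.MK k * S.parK) := by
  refine TensorProduct.ext' fun p a => ?_
  simp only [KoszulData.parK, MK, PK, Module.End.mul_apply, LinearMap.mulLeft_apply,
    LinearMap.lTensor_tmul, Algebra.TensorProduct.tmul_mul_tmul, one_mul, mul_one]

lemma dK_eq : S.dK = ∑ j, S.PK j * S.ιK j := rfl


end KoszulData

section MapHelpers

variable {𝕜 K Y : Type*} [Field 𝕜] [AddCommGroup K] [Module 𝕜 K]
  [AddCommGroup Y] [Module 𝕜 Y]

lemma mapE_mul (f f' : Module.End 𝕜 K) (g g' : Module.End 𝕜 Y) :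
    TensorProduct.map f g * TensorProduct.map f' g'
      = TensorProduct.map (f * f') (g * g') := by
  refine TensorProduct.ext' fun k y => ?_
  simp [Module.End.mul_apply]

lemma mapE_zero_left (g : Module.End 𝕜 Y) :
    TensorProduct.map (0 : Module.End 𝕜 K) g = 0 := by
  refine TensorProduct.ext' fun k y => ?_
  simp

lemma mapE_zero_right (f : Module.End 𝕜 K) :
    TensorProduct.map f (0 : Module.End 𝕜 Y) = 0 := by
  refine TensorProduct.ext' fun k y => ?_
  simp

lemma mapE_neg_left (f : Module.End 𝕜 K) (g : Module.End 𝕜 Y) :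
    TensorProduct.map (-f) g = - TensorProduct.map f g := by
  refine TensorProduct.ext' fun k y => ?_
  simp [TensorProduct.neg_tmul]

lemma mapE_neg_right (f : Module.End 𝕜 K) (g : Module.End 𝕜 Y) :
    TensorProduct.map f (-g) = - TensorProduct.map f g := by
  refine TensorProduct.ext' fun k y => ?_
  simp [TensorProduct.tmul_neg]

lemma mapE_sub_left (f f' : Module.End 𝕜 K) (g : Module.End 𝕜 Y) :
    TensorProduct.map (f - f') g = TensorProduct.map f g - TensorProduct.map f' g := by
  rw [sub_eq_add_neg, TensorProduct.map_add_left, mapE_neg_left, sub_eq_add_neg]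

lemma rT_eq (f : Module.End 𝕜 K) :
    LinearMap.rTensor Y f = TensorProduct.map f (1 : Module.End 𝕜 Y) := rfl

lemma rT_sum {J : Type*} [Fintype J] (f : J → Module.End 𝕜 K) :
    LinearMap.rTensor Y (∑ j, f j) = ∑ j, LinearMap.rTensor Y (f j) := by
  refine TensorProduct.ext' fun k y => ?_
  simp [LinearMap.rTensor_tmul, LinearMap.sum_apply, TensorProduct.sum_tmul]

end MapHelpers

/-- Koszul duality twist: for a differential `⋀P`-module `(Y, d_Y)` with action
`ι_Y(c_j)`, the nilpotent degree-0 endomorphism `α = Σ_k c^k ⊗ ι_Y(c_k)` of `K(P) ⊗ Y`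
conjugates `ι_{K(P)}(c_j) ⊗ 1` to `ι_{K(P)}(c_j) ⊗ 1 + 1 ⊗ ι_Y(c_j)` and the differential
`d_{K(P)} ⊗ 1 + 1 ⊗ d_Y - Σ_j p^j ⊗ ι_Y(c_j)` of `htY` to `d_{K(P)} ⊗ 1 + 1 ⊗ d_Y`;
consequently `e^α : K(P) ⊗ Y → htY` is an isomorphism of differential `⋀P`-modules.
(Operators `1 ⊗ B` with `B` odd incorporate the Koszul sign via the parity involution
`parK` of the first factor.) -/
theorem koszul_duality_twist {𝕜 U J Y : Type*} [Field 𝕜] [CharZero 𝕜]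
    [AddCommGroup U] [Module 𝕜 U] [Fintype J] [DecidableEq J]
    [AddCommGroup Y] [Module 𝕜 Y]
    (S : KoszulData 𝕜 U J)
    (dY : Module.End 𝕜 Y) (ιY : J → Module.End 𝕜 Y)
    (hdY : dY ∘ₗ dY = 0)
    (hιY_anti : ∀ i j, ιY i ∘ₗ ιY j + ιY j ∘ₗ ιY i = 0)
    (hιY_d : ∀ j, dY ∘ₗ ιY j + ιY j ∘ₗ dY = 0)
    (α : Module.End 𝕜 ((MvPolynomial J 𝕜 ⊗[𝕜] ExteriorAlgebra 𝕜 U) ⊗[𝕜] Y))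
    (hα : α = ∑ k, TensorProduct.map
        ((LinearMap.mulLeft 𝕜
            ((1 : MvPolynomial J 𝕜) ⊗ₜ[𝕜] ι 𝕜 (S.cb k))) ∘ₗ S.parK) (ιY k))
    (N : ℕ) (hN : α ^ N = 0)
    (DKY : Module.End 𝕜 ((MvPolynomial J 𝕜 ⊗[𝕜] ExteriorAlgebra 𝕜 U) ⊗[𝕜] Y))
    (hDKY : DKY = (LinearMap.rTensor Y S.dK + TensorProduct.map S.parK dY :
        Module.End 𝕜 ((MvPolynomial J 𝕜 ⊗[𝕜] ExteriorAlgebra 𝕜 U) ⊗[𝕜] Y)))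
    (Dht : Module.End 𝕜 ((MvPolynomial J 𝕜 ⊗[𝕜] ExteriorAlgebra 𝕜 U) ⊗[𝕜] Y))
    (hDht : Dht = DKY - (∑ j, TensorProduct.map
        ((LinearMap.mulLeft 𝕜
            ((MvPolynomial.X j : MvPolynomial J 𝕜) ⊗ₜ[𝕜]
              (1 : ExteriorAlgebra 𝕜 U))) ∘ₗ S.parK) (ιY j) :
        Module.End 𝕜 ((MvPolynomial J 𝕜 ⊗[𝕜] ExteriorAlgebra 𝕜 U) ⊗[𝕜] Y))) :
    (∀ j, expE ((-1 : 𝕜) • α) N * LinearMap.rTensor Y (S.ιK j) * expE α N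
        = (LinearMap.rTensor Y (S.ιK j) + TensorProduct.map S.parK (ιY j) :
          Module.End 𝕜 ((MvPolynomial J 𝕜 ⊗[𝕜] ExteriorAlgebra 𝕜 U) ⊗[𝕜] Y)))
    ∧ expE ((-1 : 𝕜) • α) N * Dht * expE α N = DKY
    ∧ Function.Bijective (expE α N) := by
  classical
  rcases Nat.eq_zero_or_pos N with hN0 | hpos
  · subst hN0
    rw [pow_zero] at hN
    haveI : Subsingleton ((MvPolynomial J 𝕜 ⊗[𝕜] ExteriorAlgebra 𝕜 U) ⊗[𝕜] Y) := by
      refine ⟨fun a b => ?_⟩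
      have ha : a = 0 := by simpa using LinearMap.congr_fun hN a
      have hb : b = 0 := by simpa using LinearMap.congr_fun hN b
      rw [ha, hb]
    exact ⟨fun j => LinearMap.ext fun v => Subsingleton.elim _ _,
      LinearMap.ext fun v => Subsingleton.elim _ _,
      ⟨fun a b _ => Subsingleton.elim a b, fun y => ⟨y, Subsingleton.elim _ _⟩⟩⟩
  have h0 : N ≠ 0 := hpos.ne'
  have hαA : α = ∑ k, TensorProduct.map (S.MK k * S.parK) (ιY k) := hα
  -- helper for sums of `if`-maps
  have hsum_ite : ∀ (G : Module.End 𝕜 (MvPolynomial J 𝕜 ⊗[𝕜] ExteriorAlgebra 𝕜 U))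
      (g : J → Module.End 𝕜 Y) (j : J),
      (∑ k, TensorProduct.map (if k = j then G else 0) (g k)) = TensorProduct.map G (g j) := by
    intro G g j
    have hterm : ∀ k, TensorProduct.map (if k = j then G else 0) (g k)
        = if k = j then TensorProduct.map G (g k) else 0 := by
      intro k; by_cases h : k = j <;> simp [h, mapE_zero_left]
    rw [Finset.sum_congr rfl fun k _ => hterm k, Finset.sum_ite_eq' Finset.univ j]
    simp
  -- F1
  have F1 : ∀ j, LinearMap.rTensor Y (S.ιK j) * α
      = α * LinearMap.rTensor Y (S.ιK j) + TensorProduct.map S.parK (ιY j) := by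
    intro j
    rw [hαA, Finset.mul_sum, Finset.sum_mul]
    have hk : ∀ k, LinearMap.rTensor Y (S.ιK j) * TensorProduct.map (S.MK k * S.parK) (ιY k)
        = TensorProduct.map (S.MK k * S.parK) (ιY k) * LinearMap.rTensor Y (S.ιK j)
          + TensorProduct.map (if k = j then S.parK else 0) (ιY k) := by
      intro k
      rw [rT_eq, mapE_mul, mapE_mul, one_mul, mul_one, S.dA1 j k, TensorProduct.map_add_left]
    rw [Finset.sum_congr rfl fun k _ => hk k, Finset.sum_add_distrib, hsum_ite S.parK ιY j]
  -- F2
  have F2 : ∀ j, α * TensorProduct.map S.parK (ιY j)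
      = TensorProduct.map S.parK (ιY j) * α := by
    intro j
    rw [← sub_eq_zero, hαA, Finset.sum_mul, Finset.mul_sum, ← Finset.sum_sub_distrib]
    have hk : ∀ k, TensorProduct.map (S.MK k * S.parK) (ιY k) * TensorProduct.map S.parK (ιY j)
        - TensorProduct.map S.parK (ιY j) * TensorProduct.map (S.MK k * S.parK) (ιY k)
        = TensorProduct.map (S.MK k) (ιY k * ιY j + ιY j * ιY k) := by
      intro k
      rw [mapE_mul, mapE_mul, S.dA2a, S.dA2b, mapE_neg_left, sub_neg_eq_add,
        ← TensorProduct.map_add_right]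
    rw [Finset.sum_congr rfl fun k _ => hk k]
    have hz : ∀ k, ιY k * ιY j + ιY j * ιY k = 0 := fun k => hιY_anti k j
    simp [hz, mapE_zero_right]
  -- C
  set C : Module.End 𝕜 ((MvPolynomial J 𝕜 ⊗[𝕜] ExteriorAlgebra 𝕜 U) ⊗[𝕜] Y) :=
    ∑ j, TensorProduct.map (S.PK j * S.parK) (ιY j) with hC
  have hDhtC : Dht = DKY - C := hDht
  -- F4 : α and C commute
  have F4 : α * C = C * α := by
    rw [← sub_eq_zero, hαA, hC, Finset.sum_mul_sum, Finset.sum_mul_sum]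
    rw [Finset.sum_comm (s := Finset.univ) (t := Finset.univ)]
    rw [← Finset.sum_sub_distrib]
    refine Finset.sum_eq_zero fun j _ => ?_
    rw [← Finset.sum_sub_distrib]
    refine Finset.sum_eq_zero fun k _ => ?_
    rw [mapE_mul, mapE_mul]
    have e1 : (S.MK k * S.parK) * (S.PK j * S.parK) = S.PK j * S.MK k := by
      rw [← mul_assoc, S.dA3 j k, mul_assoc, mul_assoc, ← mul_assoc (S.MK k), S.dA2a]
    have e2 : (S.PK j * S.parK) * (S.MK k * S.parK) = -(S.PK j * S.MK k) := by
      rw [mul_assoc, S.dA2b, mul_neg]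
    rw [e1, e2, mapE_neg_left, sub_neg_eq_add, ← TensorProduct.map_add_right,
      show ιY k * ιY j + ιY j * ιY k = 0 from hιY_anti k j, mapE_zero_right]
  -- F3a
  have F3a : LinearMap.rTensor Y S.dK * α - α * LinearMap.rTensor Y S.dK = C := by
    rw [S.dK_eq, rT_sum, hαA, Finset.sum_mul_sum, Finset.sum_mul_sum]
    rw [Finset.sum_comm (s := Finset.univ) (t := Finset.univ)
      (f := fun k j => TensorProduct.map (S.MK k * S.parK) (ιY k)
        * LinearMap.rTensor Y (S.PK j * S.ιK j))]
    rw [← Finset.sum_sub_distrib, hC]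
    refine Finset.sum_congr rfl fun j _ => ?_
    rw [← Finset.sum_sub_distrib]
    have hk : ∀ k, LinearMap.rTensor Y (S.PK j * S.ιK j)
          * TensorProduct.map (S.MK k * S.parK) (ιY k)
        - TensorProduct.map (S.MK k * S.parK) (ιY k) * LinearMap.rTensor Y (S.PK j * S.ιK j)
        = TensorProduct.map (if k = j then S.PK j * S.parK else 0) (ιY k) := by
      intro k
      rw [rT_eq, mapE_mul, mapE_mul, one_mul, mul_one]
      have e1 : (S.PK j * S.ιK j) * (S.MK k * S.parK)
          = (S.MK k * S.parK) * (S.PK j * S.ιK j)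
            + (if k = j then S.PK j * S.parK else 0) := by
        rw [mul_assoc, S.dA1 j k, mul_add, ← mul_assoc, ← S.dA3 j k, mul_assoc, mul_ite, mul_zero]
      rw [e1, TensorProduct.map_add_left, add_sub_cancel_left]
    rw [Finset.sum_congr rfl fun k _ => hk k, hsum_ite (S.PK j * S.parK) ιY j]
  -- F3b
  have F3b : TensorProduct.map S.parK dY * α - α * TensorProduct.map S.parK dY = 0 := by
    rw [hαA, Finset.mul_sum, Finset.sum_mul, ← Finset.sum_sub_distrib]
    refine Finset.sum_eq_zero fun k _ => ?_
    rw [mapE_mul, mapE_mul, S.dA2b, mul_assoc, S.parK2, mul_one, mapE_neg_left,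
      show dY * ιY k = -(ιY k * dY) from eq_neg_of_add_eq_zero_left (hιY_d k),
      mapE_neg_right]
    simp
  -- F3
  have F3 : Dht * α = α * Dht + C := by
    have key : Dht * α - α * Dht = C := by
      rw [hDhtC, hDKY]
      have expand : (LinearMap.rTensor Y S.dK + TensorProduct.map S.parK dY - C) * α
          - α * (LinearMap.rTensor Y S.dK + TensorProduct.map S.parK dY - C)
          = (LinearMap.rTensor Y S.dK * α - α * LinearMap.rTensor Y S.dK)
            + (TensorProduct.map S.parK dY * α - α * TensorProduct.map S.parK dY)
            - (C * α - α * C) := by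
        rw [sub_mul, mul_sub, add_mul, mul_add]
        abel
      rw [expand, F3a, F3b, ← F4, sub_self, add_zero, sub_zero]
    rw [← key]; abel
  -- conclusions
  refine ⟨fun j => ?_, ?_, ?_⟩
  · exact expE_conj α (LinearMap.rTensor Y (S.ιK j)) (TensorProduct.map S.parK (ιY j))
      hN h0 (F1 j) (F2 j)
  · have h := expE_conj α Dht C hN h0 F3 F4
    rw [h, hDhtC]
    abel
  · have hinv1 : expE ((-1:𝕜) • α) N * expE α N = 1 := expE_neg_mul α hN h0
    have hinv2 : expE α N * expE ((-1:𝕜) • α) N = 1 := expE_mul_neg α hN h0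
    constructor
    · intro a b hab
      have ha : (expE ((-1:𝕜) • α) N) ((expE α N) a) = a := by
        rw [← Module.End.mul_apply, hinv1, Module.End.one_apply]
      have hb : (expE ((-1:𝕜) • α) N) ((expE α N) b) = b := by
        rw [← Module.End.mul_apply, hinv1, Module.End.one_apply]
      rw [← ha, ← hb, hab]
    · intro w
      refine ⟨(expE ((-1:𝕜) • α) N) w, ?_⟩
      rw [← Module.End.mul_apply, hinv2, Module.End.one_apply]
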